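/- arXiv:2112.09110 — 2 statements merged into one kernel-verified Lean document; each statement's English description precedes it below -/
import Mathlib

section
/- Let F be a field, N ≥ 2 an integer, and let V, W, S be finite-dimensional F-vector spaces. Suppose there is an exact triangle h : V → S, f : S → W, g : W → V of F-linear maps intertwining the endomorphisms X_V = 0 on V, Y on S with Y^(N-1) = 0, and X on W, and suppose W is a free F[X]/(X^N)-module under X. Then rank(g) = (dim_F W)/N. -/
open Polynomial

/-- Multiplication by the class of `X` on a module over `F[X]/(X^N)`,
as an `F`-linear endomorphism. -/
noncomputable def xSMul (F : Type*) [Field F] (N : ℕ)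
    (W : Type*) [AddCommGroup W] [Module F W]
    [Module (F[X] ⧸ Ideal.span {(X : F[X]) ^ N}) W]
    [IsScalarTower F (F[X] ⧸ Ideal.span {(X : F[X]) ^ N}) W] : W →ₗ[F] W :=
  (LinearMap.lsmul (F[X] ⧸ Ideal.span {(X : F[X]) ^ N}) W
    (Ideal.Quotient.mk (Ideal.span {(X : F[X]) ^ N}) X)).restrictScalars F

theorem stmt_4 (F : Type*) [Field F] (N : ℕ) (hN : 2 ≤ N)
    (V S W : Type*) [AddCommGroup V] [Module F V] [AddCommGroup S] [Module F S]
    [AddCommGroup W] [Module F W]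
    [FiniteDimensional F V] [FiniteDimensional F S] [FiniteDimensional F W]
    [Module (F[X] ⧸ Ideal.span {(X : F[X]) ^ N}) W]
    [IsScalarTower F (F[X] ⧸ Ideal.span {(X : F[X]) ^ N}) W]
    [Module.Free (F[X] ⧸ Ideal.span {(X : F[X]) ^ N}) W]
    (Y : S →ₗ[F] S) (hY : Y ^ (N - 1) = 0)
    (h : V →ₗ[F] S) (f : S →ₗ[F] W) (g : W →ₗ[F] V)
    -- exactness of the triangle V → S → W → V
    (hexS : LinearMap.range h = LinearMap.ker f)
    (hexW : LinearMap.range f = LinearMap.ker g)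
    (hexV : LinearMap.range g = LinearMap.ker h)
    -- the maps intertwine the basepoint operators (the operator on V is zero)
    (hfX : f ∘ₗ Y = (xSMul F N W) ∘ₗ f)
    (hgX : g ∘ₗ (xSMul F N W) = 0)
    (hhY : Y ∘ₗ h = 0) :
    Module.finrank F (LinearMap.range g) = Module.finrank F W / N := by
  classical
  haveI : NeZero N := ⟨by omega⟩
  set R := F[X] ⧸ Ideal.span {(X : F[X]) ^ N} with hRdef
  set x : R := Ideal.Quotient.mk (Ideal.span {(X : F[X]) ^ N}) X with hxdef
  have hxN : x ^ N = 0 := by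
    rw [hxdef, ← map_pow]
    exact Ideal.Quotient.eq_zero_iff_mem.2 (Ideal.subset_span rfl)
  set T : W →ₗ[F] W := xSMul F N W with hTdef
  have hT : ∀ w : W, T w = x • w := fun w => rfl
  have hTpow : ∀ (k : ℕ) (w : W), (T ^ k) w = x ^ k • w := by
    intro k
    induction k with
    | zero => intro w; simp
    | succ k ih =>
      intro w
      rw [pow_succ, Module.End.mul_apply, hT, ih, smul_smul, ← pow_succ]
  haveI : Nontrivial R := by
    refine Ideal.Quotient.nontrivial_iff.mpr ?_
    refine (Ideal.span_singleton_ne_top ?_)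
    intro hu
    have := Polynomial.natDegree_eq_zero_of_isUnit hu
    simp only [natDegree_X_pow] at this
    omega
  haveI : Module.Finite R W := Module.Finite.of_restrictScalars_finite F R W
  set ι := Module.Free.ChooseBasisIndex R W with hι
  haveI : Fintype ι := Module.Free.ChooseBasisIndex.fintype R W
  set b : Module.Basis ι R W := Module.Free.chooseBasis R W with hb
  -- power basis of R over F
  have hmon : ((X : F[X]) ^ N).Monic := monic_X_pow N
  set pb := AdjoinRoot.powerBasis' hmon with hpb
  have hdim : pb.dim = N := by simp [hpb]
  set pbB : Module.Basis (Fin N) F R := pb.basis.reindex (finCongr hdim) with hpbBdef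
  have hpbB : ∀ j : Fin N, pbB j = x ^ (j : ℕ) := by
    intro j
    have h1 : pbB j = pb.basis ((finCongr hdim).symm j) := by
      rw [hpbBdef]; erw [Module.Basis.reindex_apply]
    rw [h1]
    have h2 : pb.basis ((finCongr hdim).symm j) = pb.gen ^ (((finCongr hdim).symm j : Fin pb.dim) : ℕ) :=
      pb.basis_eq_pow _
    rw [h2]
    have h3 : (((finCongr hdim).symm j : Fin pb.dim) : ℕ) = (j : ℕ) := by simp
    rw [h3]
    rfl
  set B : Module.Basis (Fin N × ι) F W := pbB.smulTower b with hBdef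
  have hB : ∀ p : Fin N × ι, B p = x ^ (p.1 : ℕ) • b p.2 := by
    intro p
    rw [hBdef, Module.Basis.smulTower_apply, hpbB]
  set sset : Set (Fin N × ι) := {p | p.1 ≠ 0} with hsset
  set K : Submodule F W := Submodule.span F (B '' sset) with hK
  -- range T ≤ K
  have hTB : ∀ p : Fin N × ι, T (B p) ∈ K := by
    rintro ⟨j, i⟩
    rw [hB, hT, smul_smul, ← pow_succ']
    by_cases hj : (j : ℕ) + 1 = N
    · rw [hj, hxN]
      have : ((0 : R) • b i : W) = 0 := zero_smul R (b i)
      rw [this]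
      exact K.zero_mem
    · have hlt : (j : ℕ) + 1 < N := by have := j.isLt; omega
      have heq : x ^ ((j : ℕ) + 1) • b i = B (⟨(j : ℕ) + 1, hlt⟩, i) := by
        rw [hB]
      rw [heq]
      refine Submodule.subset_span ⟨(⟨(j : ℕ) + 1, hlt⟩, i), ?_, rfl⟩
      show (⟨(j : ℕ) + 1, hlt⟩ : Fin N) ≠ 0
      intro h0; have h0' := congrArg Fin.val h0
      simp only [Fin.val_zero] at h0'
      exact Nat.succ_ne_zero _ h0'
  have hrangeT : LinearMap.range T ≤ K := by
    rintro _ ⟨w, rfl⟩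
    rw [← Module.Basis.sum_repr B w, map_sum]
    refine Submodule.sum_mem _ fun p _ => ?_
    rw [map_smul]
    exact K.smul_mem _ (hTB p)
  -- K ≤ range T
  have hKrange : K ≤ LinearMap.range T := by
    rw [hK, Submodule.span_le]
    rintro _ ⟨⟨j, i⟩, hj, rfl⟩
    have hj' : (j : ℕ) ≠ 0 := by
      intro h0
      exact hj (Fin.ext (h0.trans (Fin.val_zero N).symm))
    refine ⟨x ^ ((j : ℕ) - 1) • b i, ?_⟩
    rw [hT, smul_smul, ← pow_succ', hB]
    have : (j : ℕ) - 1 + 1 = (j : ℕ) := by omega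
    rw [this]
  -- action of T^(N-1) on the basis
  have hlast : N - 1 < N := by omega
  have hTN : ∀ (j : Fin N) (i : ι),
      (T ^ (N - 1)) (B (j, i)) = if j = 0 then B (⟨N - 1, hlast⟩, i) else 0 := by
    intro j i
    rw [hB, hTpow, smul_smul, ← pow_add]
    by_cases hj : j = 0
    · rw [if_pos hj, hB]
      subst hj
      simp
    · rw [if_neg hj]
      have hj' : (j : ℕ) ≠ 0 := by
        intro h0
        exact hj (Fin.ext (h0.trans (Fin.val_zero N).symm))
      have : N - 1 + (j : ℕ) = N + ((j : ℕ) - 1) := by omega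
      rw [this, pow_add, hxN, zero_mul]
      exact zero_smul R (b i)
  -- ker T^(N-1) ≤ K
  have hkerK : LinearMap.ker (T ^ (N - 1)) ≤ K := by
    intro w hw
    have h0 : ∑ p : Fin N × ι, B.repr w p • (T ^ (N - 1)) (B p) = 0 := by
      calc ∑ p : Fin N × ι, B.repr w p • (T ^ (N - 1)) (B p)
          = (T ^ (N - 1)) (∑ p : Fin N × ι, B.repr w p • B p) := by
            rw [map_sum]; simp [map_smul]
        _ = (T ^ (N - 1)) w := by rw [Module.Basis.sum_repr]
        _ = 0 := hw
    have h1 : ∑ i : ι, B.repr w (0, i) • B (⟨N - 1, hlast⟩, i) = 0 := by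
      rw [Fintype.sum_prod_type] at h0
      rw [Finset.sum_eq_single (0 : Fin N)] at h0
      · simpa [hTN] using h0
      · intro j _ hj
        refine Finset.sum_eq_zero fun i _ => ?_
        rw [hTN, if_neg hj, smul_zero]
      · intro habs
        exact absurd (Finset.mem_univ _) habs
    have hli : LinearIndependent F fun i : ι => B (⟨N - 1, hlast⟩, i) := by
      refine B.linearIndependent.comp (fun i => (⟨N - 1, hlast⟩, i)) ?_
      intro a c hac
      exact (Prod.mk.injEq _ _ _ _ ▸ hac : _ ∧ _).2
    have hzero : ∀ i : ι, B.repr w (0, i) = 0 :=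
      Fintype.linearIndependent_iff.mp hli _ h1
    rw [hK, Module.Basis.mem_span_image]
    intro p hp
    by_contra hps
    have hp1 : p.1 = 0 := by
      by_contra hne
      exact hps hne
    have : B.repr w p = 0 := by
      obtain ⟨j, i⟩ := p
      simp only at hp1
      subst hp1
      exact hzero i
    exact Finsupp.mem_support_iff.mp hp this
  -- range f ≤ ker T^(N-1)
  have hfx' : ∀ s : S, T (f s) = f (Y s) := by
    intro s
    exact (LinearMap.ext_iff.mp hfX s).symm
  have hcomm : ∀ (k : ℕ) (s : S), (T ^ k) (f s) = f ((Y ^ k) s) := by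
    intro k
    induction k with
    | zero => intro s; simp
    | succ k ih =>
      intro s
      rw [pow_succ, Module.End.mul_apply, hfx', ih, ← Module.End.mul_apply, ← pow_succ]
  have hfT : ∀ s : S, (T ^ (N - 1)) (f s) = 0 := by
    intro s
    rw [hcomm, hY]
    simp
  -- ker g = K
  have hgT : ∀ w : W, g (T w) = 0 := fun w => LinearMap.ext_iff.mp hgX w
  have hker : LinearMap.ker g = K := by
    apply le_antisymm
    · rw [← hexW]
      rintro _ ⟨s, rfl⟩
      exact hkerK (LinearMap.mem_ker.mpr (hfT s))
    · intro w hw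
      obtain ⟨v, rfl⟩ := hKrange hw
      exact LinearMap.mem_ker.mpr (hgT v)
  -- dimension count
  set d := Fintype.card ι with hd
  have hW : Module.finrank F W = N * d := by
    rw [Module.finrank_eq_card_basis B, Fintype.card_prod, Fintype.card_fin]
  have hKfin : Module.finrank F K = (N - 1) * d := by
    have himg : B '' sset = Set.range (fun p : sset => B p) := Set.image_eq_range _ _
    have hli : LinearIndependent F (fun p : sset => B (p : Fin N × ι)) :=
      B.linearIndependent.comp _ Subtype.val_injective
    rw [hK, himg, finrank_span_eq_card hli]
    have e : sset ≃ {j : Fin N // j ≠ 0} × ι :=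
      { toFun := fun p => (⟨p.1.1, p.2⟩, p.1.2)
        invFun := fun q => ⟨(q.1.1, q.2), q.1.2⟩
        left_inv := fun _ => rfl
        right_inv := fun _ => rfl }
    rw [Fintype.card_congr e, Fintype.card_prod]
    congr 1
    have : Fintype.card {j : Fin N // ¬ j = 0} = Fintype.card (Fin N) - Fintype.card {j : Fin N // j = 0} :=
      Fintype.card_subtype_compl _
    simpa [Fintype.card_subtype_eq (0 : Fin N)] using this
  have hrn := LinearMap.finrank_range_add_finrank_ker g
  rw [hker, hKfin, hW] at hrn
  have hmul : (N - 1) * d + d = N * d := by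
    have hN1 : N - 1 + 1 = N := by omega
    calc (N - 1) * d + d = (N - 1 + 1) * d := by ring
      _ = N * d := by rw [hN1]
  rw [hW, Nat.mul_div_cancel_left _ (by omega : 0 < N)]
  have h2 : Module.finrank F (LinearMap.range g) + (N - 1) * d = d + (N - 1) * d := by
    rw [hrn, ← hmul, add_comm]
  exact Nat.add_right_cancel h2
end

section
/- In the ring R[X₁, X₂]^{S₂} of symmetric polynomials in two variables over a commutative ring R, modulo the ideal defining H*(G(2,N); R) (the ideal generated by the complete homogeneous symmetric polynomials h_{N-1}(X₁,X₂) and h_N(X₁,X₂)), the class of the second elementary symmetric polynomial e₂ = X₁X₂ satisfies e₂^{N-1} = 0. -/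
open MvPolynomial

/-- The complete homogeneous symmetric polynomial `h_k` in two variables, expressed
in terms of the elementary symmetric polynomials `e₁`, `e₂` (the two generators of
the polynomial ring `R[e₁, e₂]`), via the recursion `h_k = e₁ h_{k-1} - e₂ h_{k-2}`. -/
noncomputable def hPoly (R : Type*) [CommRing R] : ℕ → MvPolynomial (Fin 2) R
  | 0 => 1
  | 1 => X 0
  | (k + 2) => X 0 * hPoly R (k + 1) - X 1 * hPoly R k

lemma hPoly_key (R : Type*) [CommRing R] (k : ℕ) :
    hPoly R (k + 1) * hPoly R (k + 1) - hPoly R (k + 2) * hPoly R k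
      = (X 1 : MvPolynomial (Fin 2) R) ^ (k + 1) := by
  induction k with
  | zero => simp [hPoly]
  | succ n ih =>
      have h1 : hPoly R (n + 3) = X 0 * hPoly R (n + 2) - X 1 * hPoly R (n + 1) := rfl
      have h2 : hPoly R (n + 2) = X 0 * hPoly R (n + 1) - X 1 * hPoly R n := rfl
      calc hPoly R (n + 2) * hPoly R (n + 2) - hPoly R (n + 3) * hPoly R (n + 1)
          = X 1 * (hPoly R (n + 1) * hPoly R (n + 1) - hPoly R (n + 2) * hPoly R n) := by
            rw [h1]; nth_rewrite 1 [h2]; ring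
        _ = (X 1 : MvPolynomial (Fin 2) R) ^ (n + 2) := by rw [ih]; ring

/-- In `H^*(G(2,N); R) = R[e₁,e₂]/(h_{N-1}, h_N)`, the class of `e₂` satisfies
`e₂^(N-1) = 0`. -/
theorem stmt_9 (R : Type*) [CommRing R] (N : ℕ) (hN : 2 ≤ N) :
    (Ideal.Quotient.mk (Ideal.span {hPoly R (N - 1), hPoly R N})
        ((X 1 : MvPolynomial (Fin 2) R) ^ (N - 1))) = 0 := by
  obtain ⟨n, rfl⟩ : ∃ n, N = n + 2 := ⟨N - 2, by omega⟩
  rw [Ideal.Quotient.eq_zero_iff_mem]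
  have : (n + 2 - 1) = n + 1 := rfl
  rw [this, ← hPoly_key R n]
  have hm1 : hPoly R (n + 1) ∈ Ideal.span {hPoly R (n + 1), hPoly R (n + 2)} :=
    Ideal.subset_span (Set.mem_insert _ _)
  have hm2 : hPoly R (n + 2) ∈ Ideal.span {hPoly R (n + 1), hPoly R (n + 2)} :=
    Ideal.subset_span (Set.mem_insert_of_mem _ rfl)
  exact sub_mem (Ideal.mul_mem_left _ _ hm1) (Ideal.mul_mem_right _ _ hm2)
end
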